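/- Let N ≥ 2, s ∈ (0,1), and c₃, c₄ > 0. Then for all z ∈ (0,2), ∫_0^∞ t^{-(N/2+1-s)} e^{-z²/(4t) - c₃ z - c₄ t} dt ≥ C z^{-(N-2s)}, where C > 0 depends only on N, s, c₃, c₄. -/

import Mathlib

open MeasureTheory Real Set

open scoped Nat

/-!
On the window `z² < t ≤ 2z²` the integrand is bounded below by `(2z²)^a e^{-1/4 - 2c₃ - 8c₄}`,
where `a = -(N/2 + 1 - s) ≤ 0`: indeed `t^a ≥ (2z²)^a`, `z²/(4t) ≤ 1/4`, and `z < 2` gives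
`c₃z + c₄t ≤ 2c₃ + 8c₄`. The window has length `z²`, and `(z²)^a · z² = z^{-(N-2s)}`. Since the
integrand is nonnegative and integrable on `(0, ∞)`, the full integral dominates the window.
-/

lemma rpow_mul_exp_neg_div_le {a b t : ℝ} (n : ℕ) (hb : 0 < b) (ht : 0 < t) :
    t ^ a * exp (-b / t) ≤ n ! / b ^ n * t ^ (a + n) := by
  have hexp : exp (-b / t) ≤ n ! / b ^ n * t ^ n :=
    calc exp (-b / t) = (exp (b / t))⁻¹ := by rw [neg_div, exp_neg]
      _ ≤ ((b / t) ^ n / n !)⁻¹ :=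
        inv_anti₀ (by positivity) (pow_div_factorial_le_exp _ (div_pos hb ht).le n)
      _ = n ! / b ^ n * t ^ n := by rw [div_pow]; field_simp
  calc t ^ a * exp (-b / t) ≤ t ^ a * (n ! / b ^ n * t ^ n) := by gcongr
    _ = n ! / b ^ n * t ^ (a + n) := by rw [rpow_add ht, rpow_natCast]; ring

/-- `exp (-b / t)` beats any power of `t` at `0` (via `rpow_mul_exp_neg_div_le` with
`n = ⌈-a⌉₊`), and `exp (-c * t)` does so at `∞`. -/
lemma integrableOn_rpow_mul_exp_neg_div_sub_mul (a d : ℝ) {b c : ℝ} (hb : 0 < b) (hc : 0 < c) :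
    IntegrableOn (fun t ↦ t ^ a * exp (-b / t - d - c * t)) (Ioi 0) := by
  set n := ⌈-a⌉₊
  have hn : -1 < a + n := by linarith [Nat.le_ceil (-a)]
  refine Integrable.mono' ((integrableOn_rpow_mul_exp_neg_mul_rpow hn one_pos hc).const_mul
      (n ! / b ^ n * exp (-d))) (by fun_prop) ?_
  filter_upwards [ae_restrict_mem measurableSet_Ioi] with t (ht : 0 < t)
  have hbound := rpow_mul_exp_neg_div_le (a := a) n hb ht
  rw [norm_of_nonneg (by positivity), rpow_one, sub_sub, exp_sub, exp_add]
  calc t ^ a * (exp (-b / t) / (exp d * exp (c * t)))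
      = t ^ a * exp (-b / t) * (exp d)⁻¹ * (exp (c * t))⁻¹ := by ring
    _ ≤ n ! / b ^ n * t ^ (a + n) * (exp d)⁻¹ * (exp (c * t))⁻¹ := by gcongr
    _ = _ := by simp only [neg_mul, exp_neg]; ring

lemma mul_sub_le_setIntegral_Ioi_of_le_on_Ioc {f : ℝ → ℝ} {x y m : ℝ} (hx : 0 ≤ x) (hxy : x ≤ y)
    (hf : IntegrableOn f (Ioi 0)) (hf_nonneg : ∀ t ∈ Ioi 0, 0 ≤ f t)
    (hm : ∀ t ∈ Ioc x y, m ≤ f t) :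
    m * (y - x) ≤ ∫ t in Ioi 0, f t := by
  have hsub : Ioc x y ⊆ Ioi 0 := fun t ht ↦ hx.trans_lt ht.1
  calc m * (y - x) = m * volume.real (Ioc x y) := by rw [volume_real_Ioc_of_le hxy]
    _ ≤ ∫ t in Ioc x y, f t :=
      setIntegral_ge_of_const_le_real measurableSet_Ioc measure_Ioc_lt_top.ne hm (hf.mono_set hsub)
    _ ≤ ∫ t in Ioi 0, f t :=
      setIntegral_mono_set hf ((ae_restrict_mem measurableSet_Ioi).mono hf_nonneg)
        hsub.eventuallyLE

lemma rpow_mul_exp_le_of_mem_Ioc {a c₃ c₄ z t : ℝ} (ha : a ≤ 0) (hc₃ : 0 ≤ c₃) (hc₄ : 0 ≤ c₄)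
    (hz : z ∈ Ioo 0 2) (ht : t ∈ Ioc (z ^ 2) (2 * z ^ 2)) :
    (2 * z ^ 2) ^ a * exp (-(1 / 4) - 2 * c₃ - 8 * c₄) ≤
      t ^ a * exp (-z ^ 2 / (4 * t) - c₃ * z - c₄ * t) := by
  obtain ⟨hz0, hz2⟩ := hz
  obtain ⟨hzt, ht2⟩ := ht
  have ht0 : 0 < t := (pow_pos hz0 2).trans hzt
  have h1 : -(1 / 4) ≤ -z ^ 2 / (4 * t) := by
    rw [neg_div, neg_le_neg_iff, div_le_iff₀ (by positivity)]; linarith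
  have h2 : c₃ * z ≤ 2 * c₃ := by nlinarith
  have h3 : c₄ * t ≤ c₄ * 8 := mul_le_mul_of_nonneg_left (by nlinarith) hc₄
  gcongr ?_ * exp ?_
  · exact rpow_le_rpow_of_nonpos ht0 ht2 ha
  · linarith

theorem stmt11_general (N : ℕ) (s c₃ c₄ : ℝ) (hs1 : s < 1)
    (hc₃ : 0 < c₃) (hc₄ : 0 < c₄) :
    ∃ C > 0, ∀ z ∈ Ioo (0 : ℝ) 2,
      C * z ^ (-((N : ℝ) - 2 * s)) ≤
        ∫ t in Ioi (0 : ℝ),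
          t ^ (-((N : ℝ) / 2 + 1 - s)) * Real.exp (-z ^ 2 / (4 * t) - c₃ * z - c₄ * t) := by
  have ha : -((N : ℝ) / 2 + 1 - s) ≤ 0 := by linarith [N.cast_nonneg (α := ℝ)]
  set a : ℝ := -((N : ℝ) / 2 + 1 - s)
  refine ⟨2 ^ a * exp (-(1 / 4) - 2 * c₃ - 8 * c₄), by positivity, fun z hz ↦ ?_⟩
  have hz0 : 0 < z := hz.1
  have hint : IntegrableOn (fun t ↦ t ^ a * exp (-z ^ 2 / (4 * t) - c₃ * z - c₄ * t)) (Ioi 0) := by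
    refine (integrableOn_rpow_mul_exp_neg_div_sub_mul a (c₃ * z) (b := z ^ 2 / 4)
      (by positivity) hc₄).congr_fun (fun t _ ↦ ?_) measurableSet_Ioi
    simp only [neg_div, div_div]
  have hz_pow : z ^ (-((N : ℝ) - 2 * s)) = z ^ (2 * a) * (2 * z ^ 2 - z ^ 2) := by
    rw [show 2 * z ^ 2 - z ^ 2 = z ^ (2 : ℝ) by norm_num; ring, ← rpow_add hz0]
    congr 1; ring
  calc 2 ^ a * exp (-(1 / 4) - 2 * c₃ - 8 * c₄) * z ^ (-((N : ℝ) - 2 * s))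
      = (2 * z ^ 2) ^ a * exp (-(1 / 4) - 2 * c₃ - 8 * c₄) * (2 * z ^ 2 - z ^ 2) := by
        rw [hz_pow, mul_rpow zero_le_two (by positivity), ← rpow_natCast, ← rpow_mul hz0.le]
        push_cast; ring
    _ ≤ _ := mul_sub_le_setIntegral_Ioi_of_le_on_Ioc (by positivity) (by nlinarith) hint
        (fun t ht ↦ mul_nonneg (rpow_nonneg (le_of_lt ht) _) (exp_pos _).le)
        (fun t ↦ rpow_mul_exp_le_of_mem_Ioc ha hc₃.le hc₄.le hz)

/-- For c₃, c₄ > 0 there is C > 0 (depending only on N, s, c₃, c₄) such that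
for all z ∈ (0,2), ∫_0^∞ t^{-(N/2+1-s)} e^{-z²/(4t) - c₃z - c₄t} dt ≥ C z^{-(N-2s)}. -/
theorem stmt11 (N : ℕ) (s c₃ c₄ : ℝ) (hN : 2 ≤ N) (hs0 : 0 < s) (hs1 : s < 1)
    (hc₃ : 0 < c₃) (hc₄ : 0 < c₄) :
    ∃ C > 0, ∀ z ∈ Ioo (0 : ℝ) 2,
      C * z ^ (-((N : ℝ) - 2 * s)) ≤
        ∫ t in Ioi (0 : ℝ),
          t ^ (-((N : ℝ) / 2 + 1 - s)) * Real.exp (-z ^ 2 / (4 * t) - c₃ * z - c₄ * t) :=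
  stmt11_general N s c₃ c₄ hs1 hc₃ hc₄
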